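/- Let J ⊆ ℝ² be convex with respect to the product order. Then any two points a,b ∈ J that are connected by a zigzag path in J are connected by a reduced staircase in J, i.e., a zigzag path consisting only of horizontal and vertical segments (each consecutive pair comparable in the product order) with no two consecutive horizontal and no two consecutive vertical arrows. -/

import Mathlib

/-- A zigzag path `a - x₁ - ⋯ - xₙ - b` in a preorder, where each consecutive
pair of points is comparable. -/
inductive Zigzag (P : Type) [Preorder P] : P → P → Type
  | single (a : P) : Zigzag P a a
  | consLe {a b c : P} (h : a ≤ b) (p : Zigzag P b c) : Zigzag P a c
  | consGe {a b c : P} (h : b ≤ a) (p : Zigzag P b c) : Zigzag P a c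

/-- Convexity of a subset of a poset: `i ≤ j ≤ k` with `i, k ∈ J` implies `j ∈ J`. -/
def PosetConvex {P : Type} [Preorder P] (J : Set P) : Prop :=
  ∀ i ∈ J, ∀ k ∈ J, ∀ j : P, i ≤ j → j ≤ k → j ∈ J

/-- Connectedness: any two points of `J` are joined by a finite zigzag path inside `J`. -/
def ZigzagConnected {P : Type} [Preorder P] (J : Set P) : Prop :=
  ∀ a b : J, Nonempty (Zigzag (↥J) a b)

/-- A zigzag path from `a` to `b` in `J`, encoded as a list: all points lie in `J`,
consecutive points are comparable, and the list starts at `a` and ends at `b`. -/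
def IsZigzagList (J : Set (ℝ × ℝ)) (a b : ℝ × ℝ) (l : List (ℝ × ℝ)) : Prop :=
  l.head? = some a ∧ l.getLast? = some b ∧ (∀ x ∈ l, x ∈ J) ∧
  l.Chain' (fun x y => x ≤ y ∨ y ≤ x)

/-- A reduced staircase from `a` to `b` in `J`: a zigzag path all of whose arrows are
horizontal or vertical, with no two consecutive horizontal arrows and no two
consecutive vertical arrows. -/
def IsReducedStaircase (J : Set (ℝ × ℝ)) (a b : ℝ × ℝ) (l : List (ℝ × ℝ)) : Prop :=
  l.head? = some a ∧ l.getLast? = some b ∧ (∀ x ∈ l, x ∈ J) ∧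
  l.Chain' (fun x y => (x ≤ y ∨ y ≤ x) ∧ (x.1 = y.1 ∨ x.2 = y.2)) ∧
  ∀ i : ℕ, ∀ h : i + 2 < l.length,
    ¬ ((l[i]'(by omega)).1 = (l[i+1]'(by omega)).1 ∧
        (l[i+1]'(by omega)).1 = (l[i+2]'h).1) ∧
    ¬ ((l[i]'(by omega)).2 = (l[i+1]'(by omega)).2 ∧
        (l[i+1]'(by omega)).2 = (l[i+2]'h).2)

/-!
Replace every step `x — y` of the zigzag path by `x — (y.1, x.2) — y`: the corner lies between
`x` and `y`, hence in `J` by order convexity, and both new arrows are axis-parallel. Then reduce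
the staircase from right to left: when a point `x` is put in front of an already reduced
staircase, the only triples that can lie on a horizontal or vertical line start at `x`, so it
suffices to drop their middle points one by one. This keeps a staircase, because two points on
a common axis-parallel line are comparable.
-/

section Staircase

variable {α β : Type}

def AxisStep [Preorder α] [Preorder β] (x y : α × β) : Prop :=
  (x ≤ y ∨ y ≤ x) ∧ (x.1 = y.1 ∨ x.2 = y.2)

def AxisCollinear (x y z : α × β) : Prop :=
  (x.1 = y.1 ∧ y.1 = z.1) ∨ (x.2 = y.2 ∧ y.2 = z.2)

instance [DecidableEq α] [DecidableEq β] (x y z : α × β) : Decidable (AxisCollinear x y z) :=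
  inferInstanceAs (Decidable (_ ∨ _))

def NoAxisCollinear (l : List (α × β)) : Prop :=
  ∀ i : ℕ, ∀ h : i + 2 < l.length,
    ¬ ((l[i]'(by omega)).1 = (l[i+1]'(by omega)).1 ∧
        (l[i+1]'(by omega)).1 = (l[i+2]'h).1) ∧
    ¬ ((l[i]'(by omega)).2 = (l[i+1]'(by omega)).2 ∧
        (l[i+1]'(by omega)).2 = (l[i+2]'h).2)

lemma axisStep_of_fst_eq [Preorder α] [LinearOrder β] {x y : α × β} (h : x.1 = y.1) :
    AxisStep x y :=
  ⟨(le_total x.2 y.2).imp (fun h2 => ⟨h.le, h2⟩) (fun h2 => ⟨h.ge, h2⟩), .inl h⟩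

lemma axisStep_of_snd_eq [LinearOrder α] [Preorder β] {x y : α × β} (h : x.2 = y.2) :
    AxisStep x y :=
  ⟨(le_total x.1 y.1).imp (fun h1 => ⟨h1, h.le⟩) (fun h1 => ⟨h1, h.ge⟩), .inr h⟩

lemma AxisCollinear.axisStep [LinearOrder α] [LinearOrder β] {x y z : α × β}
    (h : AxisCollinear x y z) : AxisStep x z :=
  h.elim (fun h => axisStep_of_fst_eq (h.1.trans h.2))
    (fun h => axisStep_of_snd_eq (h.1.trans h.2))

lemma noAxisCollinear_of_length_le_two {l : List (α × β)} (h : l.length ≤ 2) :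
    NoAxisCollinear l := by
  intro i hi; omega

lemma NoAxisCollinear.tail {x : α × β} {l : List (α × β)} (h : NoAxisCollinear (x :: l)) :
    NoAxisCollinear l :=
  fun i hi => h (i + 1) (by simp; omega)

lemma NoAxisCollinear.cons_cons_cons {x y z : α × β} {t : List (α × β)}
    (hxyz : ¬ AxisCollinear x y z) (h : NoAxisCollinear (y :: z :: t)) :
    NoAxisCollinear (x :: y :: z :: t) := by
  rintro (_ | i) hi
  · exact ⟨fun h => hxyz (.inl h), fun h => hxyz (.inr h)⟩
  · exact h i (by simpa using hi)

section DecidableEq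

variable [DecidableEq α] [DecidableEq β]

def dropCollinear (x : α × β) : List (α × β) → List (α × β)
  | y :: z :: t => if AxisCollinear x y z then dropCollinear x (z :: t) else y :: z :: t
  | [y] => [y]
  | [] => []

def reduceCollinear : List (α × β) → List (α × β)
  | [] => []
  | x :: l => x :: dropCollinear x (reduceCollinear l)

lemma dropCollinear_suffix (x : α × β) (s : List (α × β)) : dropCollinear x s <:+ s := by
  fun_induction dropCollinear x s with
  | case1 y z t _ ih => exact ih.trans (List.suffix_cons _ _)
  | case2 | case3 | case4 => exact List.suffix_refl _

lemma getLast?_dropCollinear (x : α × β) (s : List (α × β)) :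
    (dropCollinear x s).getLast? = s.getLast? := by
  fun_induction dropCollinear x s with
  | case1 y z t _ ih => rw [ih, List.getLast?_cons_cons]
  | case2 | case3 | case4 => rfl

lemma NoAxisCollinear.cons_dropCollinear (x : α × β) {s : List (α × β)}
    (hs : NoAxisCollinear s) : NoAxisCollinear (x :: dropCollinear x s) := by
  fun_induction dropCollinear x s with
  | case1 y z t _ ih => exact ih hs.tail
  | case2 y z t hxyz => exact hs.cons_cons_cons hxyz
  | case3 | case4 => exact noAxisCollinear_of_length_le_two (by simp)

lemma head?_reduceCollinear (l : List (α × β)) : (reduceCollinear l).head? = l.head? := by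
  cases l <;> rfl

lemma getLast?_reduceCollinear (l : List (α × β)) :
    (reduceCollinear l).getLast? = l.getLast? := by
  induction l with
  | nil => rfl
  | cons x l ih =>
    rw [reduceCollinear, List.getLast?_cons, getLast?_dropCollinear, ih, List.getLast?_cons]

lemma reduceCollinear_subset (l : List (α × β)) : reduceCollinear l ⊆ l := by
  induction l with
  | nil => exact List.Subset.refl _
  | cons x l ih =>
    exact List.cons_subset_cons x fun p hp => ih ((dropCollinear_suffix x _).subset hp)

lemma noAxisCollinear_reduceCollinear (l : List (α × β)) :
    NoAxisCollinear (reduceCollinear l) := by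
  induction l with
  | nil => exact noAxisCollinear_of_length_le_two (by simp [reduceCollinear])
  | cons x l ih => exact ih.cons_dropCollinear x

end DecidableEq

lemma axisStep_head_dropCollinear [LinearOrder α] [LinearOrder β] {x : α × β}
    {s : List (α × β)} (hs : ∀ w ∈ s.head?, AxisStep x w) :
    ∀ w ∈ (dropCollinear x s).head?, AxisStep x w := by
  fun_induction dropCollinear x s with
  | case1 y z t hxyz ih => exact ih (by simpa using hxyz.axisStep)
  | case2 | case3 | case4 => exact hs

lemma List.IsChain.reduceCollinear [LinearOrder α] [LinearOrder β] {l : List (α × β)}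
    (hl : l.IsChain AxisStep) : (reduceCollinear l).IsChain AxisStep := by
  induction l with
  | nil => exact hl
  | cons x l ih =>
    rw [List.isChain_cons] at hl
    rw [_root_.reduceCollinear, List.isChain_cons]
    refine ⟨axisStep_head_dropCollinear ?_, (ih hl.2).suffix (dropCollinear_suffix x _)⟩
    rw [head?_reduceCollinear]
    exact hl.1

def insertCorners : List (α × β) → List (α × β)
  | x :: y :: t => x :: (y.1, x.2) :: insertCorners (y :: t)
  | [x] => [x]
  | [] => []

lemma head?_insertCorners (l : List (α × β)) : (insertCorners l).head? = l.head? := by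
  fun_cases insertCorners l <;> rfl

lemma getLast?_insertCorners (l : List (α × β)) :
    (insertCorners l).getLast? = l.getLast? := by
  fun_induction insertCorners l with
  | case1 x y t ih => simp only [List.getLast?_cons, ih, Option.getD_some]
  | case2 | case3 => rfl

lemma isChain_insertCorners [LinearOrder α] [LinearOrder β] (l : List (α × β)) :
    (insertCorners l).IsChain AxisStep := by
  fun_induction insertCorners l with
  | case1 x y t ih =>
    rw [List.isChain_cons_cons, List.isChain_cons, head?_insertCorners]
    refine ⟨axisStep_of_snd_eq rfl, ?_, ih⟩
    rintro _ ⟨⟩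
    exact axisStep_of_fst_eq rfl
  | case2 x => exact List.isChain_singleton x
  | case3 => exact List.isChain_nil

lemma PosetConvex.corner_mem [Preorder α] [Preorder β] {J : Set (α × β)} (hJ : PosetConvex J)
    {x y : α × β} (hx : x ∈ J) (hy : y ∈ J) (hxy : x ≤ y ∨ y ≤ x) : (y.1, x.2) ∈ J :=
  hxy.elim (fun h => hJ x hx y hy _ ⟨h.1, le_rfl⟩ ⟨le_rfl, h.2⟩)
    (fun h => hJ y hy x hx _ ⟨le_rfl, h.2⟩ ⟨h.1, le_rfl⟩)

lemma PosetConvex.insertCorners_subset [Preorder α] [Preorder β] {J : Set (α × β)}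
    (hJ : PosetConvex J) {l : List (α × β)} (hl : ∀ x ∈ l, x ∈ J)
    (hc : l.IsChain (fun x y => x ≤ y ∨ y ≤ x)) : ∀ p ∈ insertCorners l, p ∈ J := by
  fun_induction insertCorners l with
  | case1 x y t ih =>
    rw [List.isChain_cons_cons] at hc
    have hx := hl x (by simp)
    have hy := hl y (by simp)
    simp only [List.forall_mem_cons]
    exact ⟨hx, hJ.corner_mem hx hy hc.1, ih (fun p hp => hl p (List.mem_cons_of_mem x hp)) hc.2⟩
  | case2 | case3 => exact hl

end Staircase

theorem statement16 (J : Set (ℝ × ℝ)) (hconv : PosetConvex J)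
    (a b : ℝ × ℝ)
    (l : List (ℝ × ℝ)) (hl : IsZigzagList J a b l) :
    ∃ s : List (ℝ × ℝ), IsReducedStaircase J a b s := by
  obtain ⟨hhead, hlast, hmem, hchain⟩ := hl
  refine ⟨reduceCollinear (insertCorners l), ?_, ?_, ?_, ?_, ?_⟩
  · rw [head?_reduceCollinear, head?_insertCorners, hhead]
  · rw [getLast?_reduceCollinear, getLast?_insertCorners, hlast]
  · exact fun p hp => hconv.insertCorners_subset hmem hchain p (reduceCollinear_subset _ hp)
  · exact (isChain_insertCorners l).reduceCollinear
  · exact noAxisCollinear_reduceCollinear _
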